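/- arXiv:2411.00779 — 4 statements merged into one kernel-verified Lean document; each statement's English description precedes it below -/
import Mathlib

section
/- Let n ≥ 2, q > 1, p ∈ ℝ, let Ω be a convex body in ℝⁿ containing the origin in its interior, and let u be a q-torsion function of Ω. If η ⊆ S^{n-1} is a Borel set whose reverse spherical image has vanishing surface area measure, i.e. H^{n-1}({y ∈ ∂Ω : ∃ v ∈ η with ⟨y,v⟩ = h_Ω(v)}) = 0, then Q̃_{q,n-p}(Ω,η) = 0. In other words, the p-th dual q-torsional measure is absolutely continuous with respect to the surface area measure of Ω. -/
open MeasureTheory Metric Filter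
open scoped InnerProductSpace ENNReal Topology

/-- The support function of a set `K`: `h_K(x) = sup_{y ∈ K} ⟪x, y⟫`. -/
noncomputable def suppFn {n : ℕ} (K : Set (EuclideanSpace ℝ (Fin n)))
    (x : EuclideanSpace ℝ (Fin n)) : ℝ :=
  sSup ((fun y => ⟪x, y⟫_ℝ) '' K)

/-- The radial function of a set `K`: `ρ_K(v) = max {c > 0 : c • v ∈ K}`. -/
noncomputable def radFn {n : ℕ} (K : Set (EuclideanSpace ℝ (Fin n)))
    (v : EuclideanSpace ℝ (Fin n)) : ℝ :=
  sSup {c : ℝ | 0 < c ∧ c • v ∈ K}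


/-- `u` is a `q`-torsion function of the convex body `Ω`, with (continuous extension of the)
gradient `G`: `u` is continuous on `Ω`, vanishes on `∂Ω`, is positive on the interior,
has gradient `G` on the interior, `G` is continuous on `Ω`, and `Δ_q u = -1` weakly. -/
structure IsQTorsion {n : ℕ} (q : ℝ) (Ω : Set (EuclideanSpace ℝ (Fin n)))
    (u : EuclideanSpace ℝ (Fin n) → ℝ)
    (G : EuclideanSpace ℝ (Fin n) → EuclideanSpace ℝ (Fin n)) : Prop where
  contOn : ContinuousOn u Ω
  zero_on_bdry : ∀ y ∈ frontier Ω, u y = 0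
  pos_on_int : ∀ y ∈ interior Ω, 0 < u y
  grad_on_int : ∀ y ∈ interior Ω, HasGradientAt u (G y) y
  grad_cont : ContinuousOn G Ω
  weak_sol : ∀ φ : EuclideanSpace ℝ (Fin n) → ℝ, ContDiff ℝ (⊤ : ℕ∞) φ → HasCompactSupport φ →
    tsupport φ ⊆ interior Ω →
    ∫ y in interior Ω, ‖G y‖ ^ (q - 2) * ⟪G y, gradient φ y⟫_ℝ = ∫ y in interior Ω, φ y

/-- The spherical Lebesgue measure `σ` on `S^{n-1}`: the `(n-1)`-dimensional Hausdorff
measure restricted to the unit sphere. -/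
noncomputable def sphLeb (n : ℕ) : Measure (EuclideanSpace ℝ (Fin n)) :=
  (μH[(n : ℝ) - 1]).restrict (sphere (0 : EuclideanSpace ℝ (Fin n)) 1)

/-- The reverse radial Gauss image of `η ⊆ S^{n-1}` with respect to `Ω`:
`α*_Ω(η) = {v ∈ S^{n-1} : ∃ ξ ∈ η, ρ_Ω(v)⟪v,ξ⟫ = h_Ω(ξ)}`. -/
def revRadGauss {n : ℕ} (Ω η : Set (EuclideanSpace ℝ (Fin n))) :
    Set (EuclideanSpace ℝ (Fin n)) :=
  {v | v ∈ sphere (0 : EuclideanSpace ℝ (Fin n)) 1 ∧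
    ∃ ξ ∈ η, radFn Ω v * ⟪v, ξ⟫_ℝ = suppFn Ω ξ}

/-- The `p`-th dual `q`-torsional measure of `Ω` (with torsion gradient `G`) evaluated on `η`:
`Q̃_{q,n-p}(Ω,η) = ((q-1)/(n(q-1)+q)) ∫_{α*_Ω(η)} ρ_Ω(v)^p ‖∇u(ρ_Ω(v)v)‖^q dσ(v)`. -/
noncomputable def dualTorsMeas {n : ℕ} (q p : ℝ) (Ω : Set (EuclideanSpace ℝ (Fin n)))
    (G : EuclideanSpace ℝ (Fin n) → EuclideanSpace ℝ (Fin n))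
    (η : Set (EuclideanSpace ℝ (Fin n))) : ℝ :=
  ((q - 1) / (n * (q - 1) + q)) *
    ∫ v in revRadGauss Ω η, (radFn Ω v) ^ p * ‖G (radFn Ω v • v)‖ ^ q ∂(sphLeb n)

/-- Auxiliary: for a compact body containing a ball around the origin, the radial point
`ρ(v) • v` lies on the frontier for every unit vector `v`, and `ρ(v) > 0`. -/
lemma radFn_pos_and_mem_frontier {n : ℕ} {Ω : Set (EuclideanSpace ℝ (Fin n))}
    (hΩ_comp : IsCompact Ω) {r : ℝ} (hr : 0 < r)
    (hball : ball (0 : EuclideanSpace ℝ (Fin n)) r ⊆ interior Ω)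
    {v : EuclideanSpace ℝ (Fin n)} (hv : ‖v‖ = 1) :
    0 < radFn Ω v ∧ radFn Ω v • v ∈ frontier Ω := by
  obtain ⟨R, hR⟩ := hΩ_comp.isBounded.subset_closedBall 0
  set S : Set ℝ := {c : ℝ | 0 < c ∧ c • v ∈ Ω} with hS
  have hmem_half : (r / 2) ∈ S := by
    refine ⟨by linarith, ?_⟩
    have : (r / 2) • v ∈ ball (0 : EuclideanSpace ℝ (Fin n)) r := by
      rw [mem_ball_zero_iff, norm_smul, hv, mul_one, Real.norm_eq_abs,
        abs_of_pos (by linarith : (0:ℝ) < r / 2)]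
      linarith
    exact interior_subset (hball this)
  have hne : S.Nonempty := ⟨r / 2, hmem_half⟩
  have hbdd : BddAbove S := by
    refine ⟨R, fun c hc => ?_⟩
    have := hR hc.2
    rw [mem_closedBall_zero_iff, norm_smul, hv, mul_one, Real.norm_eq_abs,
      abs_of_pos hc.1] at this
    exact this
  have hρpos : 0 < radFn Ω v := lt_of_lt_of_le (by linarith) (le_csSup hbdd hmem_half)
  have hmemΩ : radFn Ω v • v ∈ Ω := by
    have h1 : radFn Ω v ∈ closure S := csSup_mem_closure hne hbdd
    have h2 : (fun c : ℝ => c • v) '' closure S ⊆ closure ((fun c : ℝ => c • v) '' S) :=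
      image_closure_subset_closure_image (by continuity)
    have h3 : (fun c : ℝ => c • v) '' S ⊆ Ω := by
      rintro _ ⟨c, hc, rfl⟩; exact hc.2
    have := h2 ⟨radFn Ω v, h1, rfl⟩
    have h4 : closure ((fun c : ℝ => c • v) '' S) ⊆ Ω := by
      rw [← hΩ_comp.isClosed.closure_eq]; exact closure_mono h3
    exact h4 this
  refine ⟨hρpos, ?_⟩
  rw [frontier, hΩ_comp.isClosed.closure_eq]
  refine ⟨hmemΩ, fun hint => ?_⟩
  obtain ⟨ε, hε, hεball⟩ := Metric.isOpen_iff.mp isOpen_interior _ hint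
  have hmem' : (radFn Ω v + ε / 2) ∈ S := by
    refine ⟨by linarith, interior_subset (hεball ?_)⟩
    rw [mem_ball, dist_eq_norm, ← sub_smul, norm_smul, hv, mul_one, Real.norm_eq_abs]
    rw [show radFn Ω v + ε / 2 - radFn Ω v = ε / 2 by ring,
      abs_of_pos (by linarith : (0:ℝ) < ε / 2)]
    linarith
  have hle : radFn Ω v + ε / 2 ≤ radFn Ω v := le_csSup hbdd hmem'
  linarith

/-- Auxiliary: the normalization map is Lipschitz on the complement of a ball. -/
lemma lipschitzOnWith_normalize {n : ℕ} {r : ℝ} (hr : 0 < r) :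
    LipschitzOnWith (Real.toNNReal (2 / r))
      (fun y : EuclideanSpace ℝ (Fin n) => ‖y‖⁻¹ • y) {y | r ≤ ‖y‖} := by
  rw [lipschitzOnWith_iff_dist_le_mul]
  intro a ha b hb
  simp only [Set.mem_setOf_eq] at ha hb
  have hA : (0 : ℝ) < ‖a‖ := lt_of_lt_of_le hr ha
  have hB : (0 : ℝ) < ‖b‖ := lt_of_lt_of_le hr hb
  rw [Real.coe_toNNReal _ (by positivity), dist_eq_norm, dist_eq_norm]
  have hsplit : ‖a‖⁻¹ • a - ‖b‖⁻¹ • b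
      = ‖a‖⁻¹ • (a - b) + (‖a‖⁻¹ - ‖b‖⁻¹) • b := by module
  rw [hsplit]
  have h1 : ‖‖a‖⁻¹ • (a - b)‖ ≤ r⁻¹ * ‖a - b‖ := by
    rw [norm_smul, Real.norm_eq_abs, abs_of_pos (by positivity)]
    exact mul_le_mul_of_nonneg_right (inv_anti₀ hr ha) (norm_nonneg _)
  have h2 : ‖(‖a‖⁻¹ - ‖b‖⁻¹) • b‖ ≤ ‖a - b‖ / r := by
    rw [norm_smul, Real.norm_eq_abs]
    have heq : ‖a‖⁻¹ - ‖b‖⁻¹ = (‖b‖ - ‖a‖) / (‖a‖ * ‖b‖) := by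
      field_simp
    rw [heq, abs_div, abs_of_pos (mul_pos hA hB)]
    have habs : |‖b‖ - ‖a‖| ≤ ‖a - b‖ := by
      rw [abs_sub_comm]
      exact abs_norm_sub_norm_le a b
    calc |‖b‖ - ‖a‖| / (‖a‖ * ‖b‖) * ‖b‖
        = |‖b‖ - ‖a‖| / ‖a‖ := by field_simp
      _ ≤ ‖a - b‖ / r := div_le_div₀ (norm_nonneg _) habs hr ha
  calc ‖‖a‖⁻¹ • (a - b) + (‖a‖⁻¹ - ‖b‖⁻¹) • b‖
      ≤ ‖‖a‖⁻¹ • (a - b)‖ + ‖(‖a‖⁻¹ - ‖b‖⁻¹) • b‖ := norm_add_le _ _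
    _ ≤ r⁻¹ * ‖a - b‖ + ‖a - b‖ / r := add_le_add h1 h2
    _ = 2 / r * ‖a - b‖ := by field_simp; ring

/-- Absolute continuity of the `p`-th dual `q`-torsional measure with respect to the surface
area measure: if the reverse spherical image of a Borel set `η ⊆ S^{n-1}` has vanishing
`(n-1)`-dimensional Hausdorff measure, then `Q̃_{q,n-p}(Ω,η) = 0`. -/
theorem stmt6 (n : ℕ) (hn : 2 ≤ n) (q p : ℝ) (hq : 1 < q)
    (Ω : Set (EuclideanSpace ℝ (Fin n))) (hΩ_comp : IsCompact Ω) (hΩ_conv : Convex ℝ Ω)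
    (hΩ0 : (0 : EuclideanSpace ℝ (Fin n)) ∈ interior Ω)
    (u : EuclideanSpace ℝ (Fin n) → ℝ)
    (G : EuclideanSpace ℝ (Fin n) → EuclideanSpace ℝ (Fin n))
    (hu : IsQTorsion q Ω u G)
    (η : Set (EuclideanSpace ℝ (Fin n))) (hη_meas : MeasurableSet η)
    (hη_sub : η ⊆ sphere (0 : EuclideanSpace ℝ (Fin n)) 1)
    (h0 : μH[(n : ℝ) - 1]
        {y : EuclideanSpace ℝ (Fin n) | y ∈ frontier Ω ∧ ∃ v ∈ η, ⟪y, v⟫_ℝ = suppFn Ω v} = 0) :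
    dualTorsMeas q p Ω G η = 0 := by
  obtain ⟨r, hr, hball⟩ := Metric.isOpen_iff.mp isOpen_interior 0 hΩ0
  set E : Set (EuclideanSpace ℝ (Fin n)) :=
    {y | y ∈ frontier Ω ∧ ∃ v ∈ η, ⟪y, v⟫_ℝ = suppFn Ω v} with hE
  set f : EuclideanSpace ℝ (Fin n) → EuclideanSpace ℝ (Fin n) :=
    fun y => ‖y‖⁻¹ • y with hf
  -- the frontier avoids the small ball
  have hfr : E ⊆ {y | r ≤ ‖y‖} := by
    intro y hy
    by_contra hcon
    simp only [Set.mem_setOf_eq, not_le] at hcon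
    have : y ∈ ball (0 : EuclideanSpace ℝ (Fin n)) r := by
      rwa [mem_ball_zero_iff]
    exact hy.1.2 (hball this)
  -- inclusion of the reverse radial Gauss image into the normalized image of E
  have hsub : revRadGauss Ω η ⊆ f '' E := by
    rintro v ⟨hvsph, ξ, hξ, hξeq⟩
    have hv1 : ‖v‖ = 1 := by rwa [mem_sphere_zero_iff_norm] at hvsph
    obtain ⟨hρpos, hρfr⟩ := radFn_pos_and_mem_frontier hΩ_comp hr hball hv1
    refine ⟨radFn Ω v • v, ⟨hρfr, ξ, hξ, ?_⟩, ?_⟩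
    · rw [real_inner_smul_left]; exact hξeq
    · show ‖radFn Ω v • v‖⁻¹ • radFn Ω v • v = v
      rw [norm_smul, hv1, mul_one, Real.norm_eq_abs, abs_of_pos hρpos, smul_smul,
        inv_mul_cancel₀ (ne_of_gt hρpos), one_smul]
  -- the image has Hausdorff measure zero since f is Lipschitz on E
  have hd : (0 : ℝ) ≤ (n : ℝ) - 1 := by
    have : (2 : ℝ) ≤ (n : ℝ) := by exact_mod_cast hn
    linarith
  have hlip : LipschitzOnWith (Real.toNNReal (2 / r)) f E :=
    (lipschitzOnWith_normalize hr).mono hfr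
  have himg : μH[(n : ℝ) - 1] (f '' E) = 0 := by
    have := hlip.hausdorffMeasure_image_le hd
    rw [h0] at this
    simpa [mul_zero] using this
  -- hence the reverse radial Gauss image is σ-null
  have hnull : sphLeb n (revRadGauss Ω η) = 0 := by
    have h1 : sphLeb n (revRadGauss Ω η) ≤ μH[(n : ℝ) - 1] (revRadGauss Ω η) :=
      Measure.le_iff'.mp Measure.restrict_le_self _
    have h2 : μH[(n : ℝ) - 1] (revRadGauss Ω η) ≤ μH[(n : ℝ) - 1] (f '' E) :=
      measure_mono hsub
    exact le_antisymm (le_trans h1 (h2.trans_eq himg)) zero_le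
  -- conclude: the integral over a null set vanishes
  unfold dualTorsMeas
  rw [Measure.restrict_eq_zero.mpr hnull, integral_zero_measure, mul_zero]
end

section
/- Let n ≥ 2 and let P ⊂ ℝⁿ be a polytope (the convex hull of finitely many points) containing the origin in its interior. Call v ∈ S^{n-1} an outer facet normal of P if the face F(P,v) = {y ∈ P : ⟨y,v⟩ = h_P(v)} satisfies H^{n-1}(F(P,v)) > 0. If η ⊆ S^{n-1} is a Borel set containing no outer facet normal of P, then the reverse radial Gauss image α*_P(η) has spherical Lebesgue measure zero: σ(α*_P(η)) = 0. -/
open MeasureTheory Metric Filter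
open scoped InnerProductSpace ENNReal Topology

/-!
If `u ∈ α*_P(η)`, the boundary point `ρ_P(u) u` lies on a face `F(P, ξ)` with `ξ ∈ η`. A face of
`P = conv S` is the convex hull of the points of `S` it contains, so `P` has finitely many faces,
and those with normals in `η` are `H^{n-1}`-null by assumption; hence so is their union. As `P`
contains a ball `B(0, r)`, the points `ρ_P(u) u` have norm at least `r`, and on `{r ≤ ‖x‖}` the
radial projection `x ↦ x / ‖x‖` is Lipschitz, so it maps null sets to null sets.
-/

lemma mem_convexHull_filter_of_apply_eq {𝕜 E : Type*} [Field 𝕜] [LinearOrder 𝕜]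
    [IsStrictOrderedRing 𝕜] [AddCommGroup E] [Module 𝕜 E] (f : E →ₗ[𝕜] 𝕜) {M : 𝕜}
    {S : Finset E} (hS : ∀ s ∈ S, f s ≤ M) {x : E} (hx : x ∈ convexHull 𝕜 (S : Set E))
    (hfx : f x = M) : x ∈ convexHull 𝕜 (S.filter (f · = M) : Set E) := by
  obtain ⟨w, hw0, hw1, rfl⟩ := (Finset.convexHull_eq S).subset hx
  have hslack : ∑ s ∈ S, w s * (M - f s) = 0 := by
    simp only [mul_sub, Finset.sum_sub_distrib, ← Finset.sum_mul, hw1, one_mul, ← hfx,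
      Finset.centerMass_eq_of_sum_1 _ _ hw1, map_sum, map_smul, smul_eq_mul, id]
    ring
  have hvertex : ∀ s ∈ S, w s ≠ 0 → f s = M := fun s hs hws => by
    have := (Finset.sum_eq_zero_iff_of_nonneg fun s hs =>
      mul_nonneg (hw0 s hs) (sub_nonneg.2 (hS s hs))).1 hslack s hs
    linarith [(mul_eq_zero.1 this).resolve_left hws]
  rw [← Finset.centerMass_filter_ne_zero]
  refine convexHull_mono ?_ (Finset.centerMass_mem_convexHull _
    (fun s hs => hw0 s (Finset.mem_filter.1 hs).1)
    (by rw [Finset.sum_filter_ne_zero, hw1]; exact one_pos) fun s hs => Finset.mem_coe.2 hs)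
  intro s hs
  simp only [Finset.coe_filter, Set.mem_ofPred_eq] at hs ⊢
  exact ⟨hs.1, hvertex s hs.1 hs.2⟩

section ConvexBody

variable {n : ℕ}

def face (K : Set (EuclideanSpace ℝ (Fin n))) (ξ : EuclideanSpace ℝ (Fin n)) :
    Set (EuclideanSpace ℝ (Fin n)) :=
  {y | y ∈ K ∧ ⟪y, ξ⟫_ℝ = suppFn K ξ}

lemma inner_le_suppFn {K : Set (EuclideanSpace ℝ (Fin n))} (hK : Bornology.IsBounded K)
    (ξ : EuclideanSpace ℝ (Fin n)) {y : EuclideanSpace ℝ (Fin n)} (hy : y ∈ K) :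
    ⟪ξ, y⟫_ℝ ≤ suppFn K ξ := by
  obtain ⟨R, hR⟩ := hK.subset_closedBall 0
  refine le_csSup ⟨‖ξ‖ * R, ?_⟩ ⟨y, hy, rfl⟩
  rintro _ ⟨z, hz, rfl⟩
  exact (real_inner_le_norm ξ z).trans
    (mul_le_mul_of_nonneg_left (mem_closedBall_zero_iff.1 (hR hz)) (norm_nonneg ξ))

lemma radFn_smul_mem_and_le_radFn {K : Set (EuclideanSpace ℝ (Fin n))} (hK : IsCompact K)
    {u : EuclideanSpace ℝ (Fin n)} (hu : u ≠ 0) {r : ℝ} (hr : 0 < r) (hru : r • u ∈ K) :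
    radFn K u • u ∈ K ∧ r ≤ radFn K u := by
  set C := {c : ℝ | 0 < c ∧ c • u ∈ K}
  obtain ⟨R, hR⟩ := hK.isBounded.subset_closedBall 0
  have hC : BddAbove C := ⟨R / ‖u‖, fun c hc => by
    have := mem_closedBall_zero_iff.1 (hR hc.2)
    rw [norm_smul, Real.norm_of_nonneg hc.1.le] at this
    exact (le_div_iff₀ (norm_pos_iff.2 hu)).2 this⟩
  have hclosed : IsClosed {c : ℝ | c • u ∈ K} :=
    hK.isClosed.preimage (continuous_id.smul continuous_const)
  exact ⟨closure_minimal (fun c hc => hc.2) hclosed (csSup_mem_closure ⟨r, hr, hru⟩ hC),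
    le_csSup hC ⟨hr, hru⟩⟩

lemma face_convexHull_eq (S : Finset (EuclideanSpace ℝ (Fin n))) (ξ : EuclideanSpace ℝ (Fin n)) :
    face (convexHull ℝ (S : Set (EuclideanSpace ℝ (Fin n)))) ξ =
      convexHull ℝ (S.filter fun s => ⟪s, ξ⟫_ℝ = suppFn (convexHull ℝ ↑S) ξ : Set _) := by
  set P := convexHull ℝ (S : Set (EuclideanSpace ℝ (Fin n)))
  have hsupp : ∀ y ∈ P, ⟪y, ξ⟫_ℝ ≤ suppFn P ξ := fun y hy => by
    rw [real_inner_comm]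
    exact inner_le_suppFn (S.finite_toSet.isCompact_convexHull (𝕜 := ℝ)).isBounded ξ hy
  apply subset_antisymm
  · rintro y ⟨hyP, hy⟩
    exact mem_convexHull_filter_of_apply_eq (innerSLFlip ℝ ξ : _ →L[ℝ] ℝ).toLinearMap
      (fun s hs => hsupp s (subset_convexHull ℝ _ hs)) hyP hy
  · refine convexHull_min (fun s hs => ?_) ?_
    · simp only [Finset.coe_filter, Set.mem_ofPred_eq] at hs
      exact ⟨subset_convexHull ℝ _ hs.1, hs.2⟩
    · exact (convex_convexHull ℝ _).inter (convex_hyperplane (innerSLFlip ℝ ξ).isLinear _)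

lemma finite_range_face_convexHull (S : Finset (EuclideanSpace ℝ (Fin n))) :
    (Set.range (face (convexHull ℝ (S : Set (EuclideanSpace ℝ (Fin n)))))).Finite := by
  refine (S.powerset.finite_toSet.image
    fun T : Finset _ => convexHull ℝ (T : Set (EuclideanSpace ℝ (Fin n)))).subset ?_
  rintro _ ⟨ξ, rfl⟩
  exact ⟨_, Finset.mem_powerset.2 (Finset.filter_subset _ S), (face_convexHull_eq S ξ).symm⟩

end ConvexBody

lemma lipschitzOnWith_inv_norm_smul {E : Type*} [NormedAddCommGroup E] [NormedSpace ℝ E]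
    {r : ℝ} (hr : 0 < r) :
    LipschitzOnWith (Real.toNNReal (2 / r)) (fun x : E => ‖x‖⁻¹ • x) {x | r ≤ ‖x‖} := by
  refine LipschitzOnWith.of_dist_le_mul fun x hx y hy => ?_
  simp only [Set.mem_ofPred_eq] at hx hy
  have hx0 : 0 < ‖x‖ := hr.trans_le hx
  have hy0 : 0 < ‖y‖ := hr.trans_le hy
  rw [Real.coe_toNNReal _ (by positivity), dist_eq_norm, dist_eq_norm]
  have hsplit :
      ‖x‖⁻¹ • x - ‖y‖⁻¹ • y = ‖x‖⁻¹ • (x - y) + ((‖y‖ - ‖x‖) / ‖x‖) • (‖y‖⁻¹ • y) := by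
    have hcoef : (‖y‖ - ‖x‖) / ‖x‖ * ‖y‖⁻¹ = ‖x‖⁻¹ - ‖y‖⁻¹ := by field_simp
    rw [smul_smul, hcoef, smul_sub, sub_smul]
    abel
  have hunit : ‖‖y‖⁻¹ • y‖ = 1 := norm_smul_inv_norm (norm_pos_iff.1 hy0)
  calc ‖‖x‖⁻¹ • x - ‖y‖⁻¹ • y‖
      ≤ ‖x - y‖ / ‖x‖ + |‖y‖ - ‖x‖| / ‖x‖ := by
        rw [hsplit]
        refine (norm_add_le _ _).trans_eq ?_
        rw [norm_smul, norm_smul, hunit, norm_inv, norm_norm, Real.norm_eq_abs, abs_div,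
          abs_of_pos hx0]
        ring
    _ ≤ ‖x - y‖ / r + ‖x - y‖ / r := by
        gcongr
        rw [abs_sub_comm]
        exact abs_norm_sub_norm_le x y
    _ = 2 / r * ‖x - y‖ := by ring

lemma hausdorffMeasure_image_inv_norm_smul_eq_zero {E : Type*} [NormedAddCommGroup E]
    [NormedSpace ℝ E] [MeasurableSpace E] [BorelSpace E] {d r : ℝ} (hd : 0 ≤ d) (hr : 0 < r)
    {s : Set E} (hs : μH[d] s = 0) :
    μH[d] ((fun x : E => ‖x‖⁻¹ • x) '' (s ∩ {x | r ≤ ‖x‖})) = 0 := by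
  refine nonpos_iff_eq_zero.1 <|
    (((lipschitzOnWith_inv_norm_smul hr).mono Set.inter_subset_right).hausdorffMeasure_image_le
      hd).trans_eq ?_
  rw [measure_mono_null Set.inter_subset_left hs, mul_zero]

lemma revRadGauss_subset_image_face {n : ℕ} {K : Set (EuclideanSpace ℝ (Fin n))}
    (hK : IsCompact K) {r : ℝ} (hr : 0 < r) (hrK : closedBall 0 r ⊆ K)
    (η : Set (EuclideanSpace ℝ (Fin n))) :
    revRadGauss K η ⊆ (fun x => ‖x‖⁻¹ • x) '' ((⋃ ξ ∈ η, face K ξ) ∩ {x | r ≤ ‖x‖}) := by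
  rintro u ⟨hu, ξ, hξ, hρξ⟩
  rw [mem_sphere_zero_iff_norm] at hu
  have hru : r • u ∈ K := hrK <| by
    rw [mem_closedBall_zero_iff, norm_smul, hu, mul_one, Real.norm_of_nonneg hr.le]
  obtain ⟨hρK, hrρ⟩ := radFn_smul_mem_and_le_radFn hK (norm_pos_iff.1 (hu ▸ one_pos)) hr hru
  have hnorm : ‖radFn K u • u‖ = radFn K u := by
    rw [norm_smul, hu, mul_one, Real.norm_of_nonneg (hr.le.trans hrρ)]
  refine ⟨radFn K u • u, ⟨Set.mem_biUnion hξ ⟨hρK, ?_⟩, hrρ.trans hnorm.ge⟩, ?_⟩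
  · rw [real_inner_smul_left, hρξ]
  · simp only [hnorm, smul_smul, inv_mul_cancel₀ (hr.trans_le hrρ).ne', one_smul]

theorem stmt11_general (n : ℕ) (hn : 2 ≤ n)
    (S : Finset (EuclideanSpace ℝ (Fin n)))
    (P : Set (EuclideanSpace ℝ (Fin n))) (hP : P = convexHull ℝ (S : Set (EuclideanSpace ℝ (Fin n))))
    (hP0 : (0 : EuclideanSpace ℝ (Fin n)) ∈ interior P)
    (η : Set (EuclideanSpace ℝ (Fin n)))
    (hη_nofacet : ∀ v ∈ η,
      ¬ 0 < μH[(n : ℝ) - 1] {y : EuclideanSpace ℝ (Fin n) | y ∈ P ∧ ⟪y, v⟫_ℝ = suppFn P v}) :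
    sphLeb n (revRadGauss P η) = 0 := by
  subst hP
  have hd : (0 : ℝ) ≤ n - 1 := by linarith [show (2 : ℝ) ≤ n by exact_mod_cast hn]
  have hPc : IsCompact (convexHull ℝ (S : Set (EuclideanSpace ℝ (Fin n)))) :=
    S.finite_toSet.isCompact_convexHull (𝕜 := ℝ)
  obtain ⟨r, hr, hrP⟩ := nhds_basis_closedBall.mem_iff.1 (mem_interior_iff_mem_nhds.1 hP0)
  have hfaces : μH[(n : ℝ) - 1] (⋃ ξ ∈ η, face (convexHull ℝ ↑S) ξ) = 0 := by
    rw [← Set.sUnion_image, measure_sUnion_null_iff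
      ((finite_range_face_convexHull S).subset (Set.image_subset_range _ _)).countable]
    rintro _ ⟨ξ, hξ, rfl⟩
    exact nonpos_iff_eq_zero.1 (not_lt.1 (hη_nofacet ξ hξ))
  exact nonpos_iff_eq_zero.1 <| (Measure.restrict_apply_le _ _).trans_eq <|
    measure_mono_null (revRadGauss_subset_image_face hPc hr hrP η)
      (hausdorffMeasure_image_inv_norm_smul_eq_zero hd hr hfaces)

/-- If a Borel set `η ⊆ S^{n-1}` contains no outer facet normal of a polytope `P` containing
the origin in its interior, then the reverse radial Gauss image `α*_P(η)` has spherical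
Lebesgue measure zero. -/
theorem stmt11 (n : ℕ) (hn : 2 ≤ n)
    (S : Finset (EuclideanSpace ℝ (Fin n)))
    (P : Set (EuclideanSpace ℝ (Fin n))) (hP : P = convexHull ℝ (S : Set (EuclideanSpace ℝ (Fin n))))
    (hP0 : (0 : EuclideanSpace ℝ (Fin n)) ∈ interior P)
    (η : Set (EuclideanSpace ℝ (Fin n))) (hη_meas : MeasurableSet η)
    (hη_sub : η ⊆ sphere (0 : EuclideanSpace ℝ (Fin n)) 1)
    (hη_nofacet : ∀ v ∈ η,
      ¬ 0 < μH[(n : ℝ) - 1] {y : EuclideanSpace ℝ (Fin n) | y ∈ P ∧ ⟪y, v⟫_ℝ = suppFn P v}) :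
    sphLeb n (revRadGauss P η) = 0 :=
  stmt11_general n hn S P hP hP0 η hη_nofacet
end

section
/- Let n ≥ 2 and let f : S^{n-1} → (0,∞) be continuous. Let [f] = {y ∈ ℝⁿ : ⟨y,v⟩ ≤ f(v) for all v ∈ S^{n-1}} be the Wulff shape of f. Then the polar body of [f] equals the convex hull of the reciprocal radial points of f: {z ∈ ℝⁿ : ⟨z,y⟩ ≤ 1 for all y ∈ [f]} = conv{f(v)^{-1} v : v ∈ S^{n-1}}. -/
open MeasureTheory Metric Filter
open scoped InnerProductSpace ENNReal Topology

/-!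
The Wulff shape `[f]` is the polar of the compact set `A = {f(v)⁻¹ • v | v ∈ S^{n-1}}`, so its
polar is the bipolar of `A`. By Hahn–Banach separation (through the Riesz representation) the
bipolar of `A` is `conv A` as soon as `conv A` is closed and contains the origin. Carathéodory's
theorem makes `conv A` a continuous image of the compact set `stdSimplex × Aⁿ⁺¹`, and `conv A`
contains `0` since `A` contains positive multiples of both `v` and `-v`.
-/

open Module Set

section ConvexCombinations

variable {E : Type*} [AddCommGroup E] [Module ℝ E]

def convexCombinations (s : Set E) (m : ℕ) : Set E :=
  (fun p : (Fin m → ℝ) × (Fin m → E) => ∑ i, p.1 i • p.2 i) ''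
    (stdSimplex ℝ (Fin m) ×ˢ univ.pi fun _ => s)

lemma convexCombinations_subset_convexHull (s : Set E) (m : ℕ) :
    convexCombinations s m ⊆ convexHull ℝ s := by
  rintro _ ⟨⟨w, z⟩, ⟨⟨hw₀, hw₁⟩, hz⟩, rfl⟩
  exact (convex_convexHull ℝ s).sum_mem (fun i _ => hw₀ i) hw₁
    fun i _ => subset_convexHull ℝ s (hz i (mem_univ i))

lemma sum_smul_mem_convexCombinations {ι : Type*} [Fintype ι] {s : Set E} {w : ι → ℝ}
    {z : ι → E} (hw : w ∈ stdSimplex ℝ ι) (hz : ∀ i, z i ∈ s) :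
    ∑ i, w i • z i ∈ convexCombinations s (Fintype.card ι) := by
  let e := Fintype.equivFin ι
  refine ⟨(w ∘ e.symm, z ∘ e.symm), ⟨?_, fun j _ => hz _⟩, ?_⟩
  · exact ⟨fun j => hw.1 _, by rw [← hw.2]; exact e.symm.sum_comp w⟩
  · exact e.symm.sum_comp fun i => w i • z i

lemma convexCombinations_subset_succ {s : Set E} (hs : s.Nonempty) (m : ℕ) :
    convexCombinations s m ⊆ convexCombinations s (m + 1) := by
  obtain ⟨a, ha⟩ := hs
  rintro _ ⟨⟨w, z⟩, ⟨⟨hw₀, hw₁⟩, hz⟩, rfl⟩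
  refine ⟨(Fin.cons 0 w, Fin.cons a z), ⟨⟨?_, ?_⟩, ?_⟩, ?_⟩
  · exact Fin.cases le_rfl hw₀
  · simpa [Fin.sum_univ_succ] using hw₁
  · exact fun j _ => Fin.cases ha (fun i => hz i (mem_univ i)) j
  · simp [Fin.sum_univ_succ]

lemma convexCombinations_mono {s : Set E} (hs : s.Nonempty) {m k : ℕ} (hmk : m ≤ k) :
    convexCombinations s m ⊆ convexCombinations s k := by
  induction k, hmk using Nat.le_induction with
  | base => rfl
  | succ k _ ih => exact ih.trans (convexCombinations_subset_succ hs k)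

-- Carathéodory's theorem.
lemma convexHull_eq_convexCombinations [FiniteDimensional ℝ E] {s : Set E} (hs : s.Nonempty) :
    convexHull ℝ s = convexCombinations s (finrank ℝ E + 1) := by
  refine (Subset.antisymm ?_ (convexCombinations_subset_convexHull s _))
  intro x hx
  obtain ⟨ι, _, z, w, hzs, hz_indep, hw_pos, hw_sum, rfl⟩ :=
    eq_pos_convex_span_of_mem_convexHull hx
  have hcard : Fintype.card ι ≤ finrank ℝ E + 1 :=
    hz_indep.card_le_finrank_succ.trans (Nat.succ_le_succ (Submodule.finrank_le _))
  exact convexCombinations_mono hs hcard <|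
    sum_smul_mem_convexCombinations ⟨fun i => (hw_pos i).le, hw_sum⟩
      fun i => hzs (mem_range_self i)

variable [TopologicalSpace E] [IsTopologicalAddGroup E] [ContinuousSMul ℝ E]

lemma IsCompact.convexCombinations {s : Set E} (hs : IsCompact s) (m : ℕ) :
    IsCompact (convexCombinations s m) :=
  ((isCompact_stdSimplex ℝ _).prod (isCompact_univ_pi fun _ => hs)).image <| by fun_prop

lemma IsCompact.convexHull [FiniteDimensional ℝ E] {s : Set E} (hs : IsCompact s) :
    IsCompact (convexHull ℝ s) := by
  rcases s.eq_empty_or_nonempty with rfl | hne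
  · simp
  · rw [convexHull_eq_convexCombinations hne]
    exact hs.convexCombinations _

end ConvexCombinations

section Polar

variable {E : Type*} [NormedAddCommGroup E] [InnerProductSpace ℝ E]

-- The one-sided polar, unlike Mathlib's absolute polars `NormedSpace.polar` and `LinearMap.polar`.
def innerPolar (K : Set E) : Set E :=
  {z | ∀ y ∈ K, ⟪z, y⟫_ℝ ≤ 1}

lemma convex_innerPolar (K : Set E) : Convex ℝ (innerPolar K) := by
  simp only [innerPolar, ofPred_forall]
  exact convex_iInter₂ fun y _ => convex_halfSpace_le (innerₛₗ ℝ |>.flip y).isLinear 1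

lemma subset_innerPolar_innerPolar (K : Set E) : K ⊆ innerPolar (innerPolar K) :=
  fun y hy _ hz => real_inner_comm y _ ▸ hz y hy

-- The bipolar theorem.
theorem innerPolar_innerPolar [CompleteSpace E] {s : Set E}
    (hs : IsClosed (convexHull ℝ s)) (hs₀ : (0 : E) ∈ convexHull ℝ s) :
    innerPolar (innerPolar s) = convexHull ℝ s := by
  refine Subset.antisymm (fun z hz => ?_)
    (convexHull_min (subset_innerPolar_innerPolar s) (convex_innerPolar _))
  by_contra hzs
  obtain ⟨g, u, hg, hgz⟩ := geometric_hahn_banach_closed_point (convex_convexHull ℝ s) hs hzs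
  set w := (InnerProductSpace.toDual ℝ E).symm g
  have hw : ∀ x, ⟪w, x⟫_ℝ = g x := fun x => InnerProductSpace.toDual_symm_apply
  have hu : 0 < u := by simpa using hg 0 hs₀
  have hw_mem : u⁻¹ • w ∈ innerPolar s := fun a ha => by
    rw [real_inner_smul_left, hw, inv_mul_le_iff₀ hu, mul_one]
    exact (hg a (subset_convexHull ℝ s ha)).le
  have := hz _ hw_mem
  rw [real_inner_smul_right, real_inner_comm, hw, inv_mul_le_iff₀ hu, mul_one] at this
  exact hgz.not_ge this

end Polar

section Wulff

variable {E : Type*} [NormedAddCommGroup E] [InnerProductSpace ℝ E]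

def wulffShape (f : E → ℝ) : Set E :=
  {y | ∀ v ∈ sphere (0 : E) 1, ⟪y, v⟫_ℝ ≤ f v}

lemma wulffShape_eq_innerPolar {f : E → ℝ} (hf : ∀ v ∈ sphere (0 : E) 1, 0 < f v) :
    wulffShape f = innerPolar ((fun v => (f v)⁻¹ • v) '' sphere (0 : E) 1) := by
  ext y
  simp only [wulffShape, innerPolar, forall_mem_image]
  refine forall₂_congr fun v hv => ?_
  rw [real_inner_smul_right, inv_mul_le_iff₀ (hf v hv), mul_one]

lemma zero_mem_segment_smul_smul_neg {a b : ℝ} (ha : 0 < a) (hb : 0 < b) (v : E) :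
    (0 : E) ∈ segment ℝ (a • v) (b • -v) := by
  refine ⟨b / (a + b), a / (a + b), by positivity, by positivity, by field_simp; ring, ?_⟩
  match_scalars
  field_simp
  ring

lemma zero_mem_convexHull_smul_sphere [Nontrivial E] {c : E → ℝ}
    (hc : ∀ v ∈ sphere (0 : E) 1, 0 < c v) :
    (0 : E) ∈ convexHull ℝ ((fun v => c v • v) '' sphere (0 : E) 1) := by
  obtain ⟨v, hv⟩ := (NormedSpace.sphere_nonempty (x := (0 : E))).mpr zero_le_one
  have hv' : -v ∈ sphere (0 : E) 1 := by simpa using hv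
  exact segment_subset_convexHull (mem_image_of_mem _ hv) (mem_image_of_mem _ hv')
    (zero_mem_segment_smul_smul_neg (hc v hv) (hc (-v) hv') v)

theorem innerPolar_wulffShape [FiniteDimensional ℝ E] [Nontrivial E] {f : E → ℝ}
    (hf_cont : ContinuousOn f (sphere (0 : E) 1)) (hf_pos : ∀ v ∈ sphere (0 : E) 1, 0 < f v) :
    innerPolar (wulffShape f) = convexHull ℝ ((fun v => (f v)⁻¹ • v) '' sphere (0 : E) 1) := by
  have := FiniteDimensional.complete ℝ E
  have hcompact : IsCompact ((fun v => (f v)⁻¹ • v) '' sphere (0 : E) 1) :=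
    (isCompact_sphere 0 1).image_of_continuousOn <|
      (hf_cont.inv₀ fun v hv => (hf_pos v hv).ne').smul continuousOn_id
  rw [wulffShape_eq_innerPolar hf_pos]
  exact innerPolar_innerPolar hcompact.convexHull.isClosed
    (zero_mem_convexHull_smul_sphere fun v hv => inv_pos.mpr (hf_pos v hv))

end Wulff

/-- The polar body of the Wulff shape `[f]` of a positive continuous function `f` on the unit
sphere equals the convex hull of the points `f(v)⁻¹ • v`, `v ∈ S^{n-1}`. -/
theorem stmt12 (n : ℕ) (hn : 2 ≤ n) (f : EuclideanSpace ℝ (Fin n) → ℝ)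
    (hf_cont : ContinuousOn f (sphere (0 : EuclideanSpace ℝ (Fin n)) 1))
    (hf_pos : ∀ v ∈ sphere (0 : EuclideanSpace ℝ (Fin n)) 1, 0 < f v) :
    {z : EuclideanSpace ℝ (Fin n) |
        ∀ y ∈ {y : EuclideanSpace ℝ (Fin n) |
          ∀ v ∈ sphere (0 : EuclideanSpace ℝ (Fin n)) 1, ⟪y, v⟫_ℝ ≤ f v}, ⟪z, y⟫_ℝ ≤ 1}
      = convexHull ℝ
          ((fun v => (f v)⁻¹ • v) '' sphere (0 : EuclideanSpace ℝ (Fin n)) 1) := by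
  have : Nontrivial (EuclideanSpace ℝ (Fin n)) :=
    Module.nontrivial_of_finrank_pos (by rw [finrank_euclideanSpace_fin]; omega)
  exact innerPolar_wulffShape hf_cont hf_pos
end

section
/- Let n ≥ 2, let Θ ⊆ S^{n-1} be a closed set not contained in any closed hemisphere, let ρ₀ : Θ → (0,∞) and g : Θ → ℝ be continuous, let δ > 0, and for s ∈ (-δ,δ) let ρ_s : Θ → (0,∞) be continuous with log ρ_s(v) = log ρ₀(v) + s g(v) + o(s,v), where o(s,·)/s → 0 uniformly on Θ as s → 0. Write ⟨ρ_s⟩ = conv{ρ_s(v) v : v ∈ Θ}. Let p ∈ ℝ and let v ∈ S^{n-1} be such that there exists a unique ξ ∈ S^{n-1} with ρ_{⟨ρ₀⟩}(ξ)⟨ξ,v⟩ = h_{⟨ρ₀⟩}(v). Then ξ ∈ Θ and lim_{s→0} (h_{⟨ρ_s⟩}(v)^{-p} − h_{⟨ρ₀⟩}(v)^{-p})/s = −p · h_{⟨ρ₀⟩}(v)^{-p} · g(ξ). -/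
open MeasureTheory Metric Filter
open scoped InnerProductSpace ENNReal Topology

/-!
The support function of `conv {ρ_s(w) w : w ∈ Θ}` in direction `v` is `max_{w ∈ Θ} ρ_s(w) ⟪v, w⟫`.
Uniqueness of `ξ` makes it the strict maximiser of this function for `s = 0`. Far from `ξ` the
strict gap survives the `O(|s|)` perturbation, and near `ξ` one has
`log ρ_s = log ρ_0 + s g(ξ) + o(s)`, so `log h_s(v) = log h_0(v) + s g(ξ) + o(s)`; the power `-p`
follows by the chain rule.
-/

open Real Set

lemma abs_log_sub_log_sub_le_iff {a b t η : ℝ} (ha : 0 < a) (hb : 0 < b) :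
    |log b - log a - t| ≤ η ↔ a * exp (t - η) ≤ b ∧ b ≤ a * exp (t + η) := by
  rw [← exp_log ha, ← exp_add, ← exp_add, ← exp_log hb, exp_le_exp, exp_le_exp, log_exp,
    log_exp, abs_le]
  constructor <;> rintro ⟨h₁, h₂⟩ <;> constructor <;> linarith

lemma hasDerivAt_rpow_of_hasDerivAt_log {f : ℝ → ℝ} {x d : ℝ}
    (hf : HasDerivAt (fun s => log (f s)) d x) (hpos : ∀ᶠ s in 𝓝 x, 0 < f s) (q : ℝ) :
    HasDerivAt (fun s => f s ^ q) (q * f x ^ q * d) x := by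
  have h := (hf.mul_const q).exp.congr_of_eventuallyEq
    (hpos.mono fun s hs => rpow_def_of_pos hs q)
  rwa [← rpow_def_of_pos hpos.self_of_nhds, mul_comm d, ← mul_assoc, mul_comm (f x ^ q)] at h

section FirstVariation

variable {X : Type*} {K : Set X} {ρ : ℝ → X → ℝ} {c g : X → ℝ}

def HasUniformLogDeriv (ρ : ℝ → X → ℝ) (g : X → ℝ) (K : Set X) : Prop :=
  ∀ ε > 0, ∀ᶠ s in 𝓝 (0 : ℝ), ∀ w ∈ K, |log (ρ s w) - log (ρ 0 w) - s * g w| ≤ ε * |s|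

lemma hasUniformLogDeriv_of_forall_ne_zero
    (h : ∀ ε > (0 : ℝ), ∃ δ > (0 : ℝ), ∀ s : ℝ, |s| < δ → s ≠ 0 → ∀ w ∈ K,
      |log (ρ s w) - log (ρ 0 w) - s * g w| ≤ ε * |s|) :
    HasUniformLogDeriv ρ g K := fun ε hε => by
  obtain ⟨δ, hδ, hδlog⟩ := h ε hε
  filter_upwards [Ioo_mem_nhds (neg_neg_iff_pos.2 hδ) hδ] with s hs w hw
  rcases eq_or_ne s 0 with rfl | hs₀
  · simp
  exact hδlog s (abs_lt.2 hs) hs₀ w hw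

lemma HasUniformLogDeriv.eventually_mul_exp_le (hlog : HasUniformLogDeriv ρ g K)
    (hpos : ∀ᶠ s in 𝓝 (0 : ℝ), ∀ w ∈ K, 0 < ρ s w) {ε : ℝ} (hε : 0 < ε) :
    ∀ᶠ s in 𝓝 (0 : ℝ), ∀ w ∈ K,
      ρ 0 w * exp (s * g w - ε * |s|) ≤ ρ s w ∧ ρ s w ≤ ρ 0 w * exp (s * g w + ε * |s|) := by
  filter_upwards [hlog ε hε, hpos] with s hs hρs w hw
  exact (abs_log_sub_log_sub_le_iff (hpos.self_of_nhds w hw) (hρs w hw)).1 (hs w hw)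

lemma HasUniformLogDeriv.exists_eventually_le_mul_exp [TopologicalSpace X]
    (hlog : HasUniformLogDeriv ρ g K) (hpos : ∀ᶠ s in 𝓝 (0 : ℝ), ∀ w ∈ K, 0 < ρ s w)
    (hK : IsCompact K) (hg : ContinuousOn g K) :
    ∃ C, ∀ᶠ s in 𝓝 (0 : ℝ), ∀ w ∈ K, ρ s w ≤ ρ 0 w * exp (C * |s|) := by
  obtain ⟨G, hG⟩ := hK.exists_bound_of_continuousOn hg
  refine ⟨G + 1, ?_⟩
  filter_upwards [hlog.eventually_mul_exp_le hpos one_pos] with s hs w hw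
  have hsg : s * g w ≤ G * |s| :=
    calc s * g w ≤ |s| * |g w| := by rw [← abs_mul]; exact le_abs_self _
      _ ≤ |s| * G := mul_le_mul_of_nonneg_left (hG w hw) (abs_nonneg s)
      _ = G * |s| := mul_comm _ _
  refine (hs w hw).2.trans (mul_le_mul_of_nonneg_left (exp_le_exp.2 ?_)
    (hpos.self_of_nhds w hw).le)
  linarith

def IsStrictMaxOn (f : X → ℝ) (K : Set X) (ξ : X) : Prop :=
  ξ ∈ K ∧ ∀ w ∈ K, w ≠ ξ → f w < f ξ

lemma IsStrictMaxOn.le {f : X → ℝ} {ξ : X} (h : IsStrictMaxOn f K ξ) {w : X} (hw : w ∈ K) :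
    f w ≤ f ξ := by
  rcases eq_or_ne w ξ with rfl | hne
  exacts [le_rfl, (h.2 w hw hne).le]

variable [TopologicalSpace X]

lemma eventually_forall_mul_le_of_lt (hK : IsCompact K)
    (hρc₀ : ContinuousOn (fun w => ρ 0 w * c w) K) {C : ℝ}
    (hC : ∀ᶠ s in 𝓝 (0 : ℝ), ∀ w ∈ K, ρ s w ≤ ρ 0 w * exp (C * |s|))
    (hpos : ∀ᶠ s in 𝓝 (0 : ℝ), ∀ w ∈ K, 0 ≤ ρ s w) {M : ℝ} (hM : 0 < M)
    (hlt : ∀ w ∈ K, ρ 0 w * c w < M) {u : ℝ → ℝ} (hu : ContinuousAt u 0) (hu₀ : u 0 = 1) :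
    ∀ᶠ s in 𝓝 (0 : ℝ), ∀ w ∈ K, ρ s w * c w ≤ M * u s := by
  obtain ⟨m, hm₀, hmM, hm⟩ : ∃ m, 0 ≤ m ∧ m < M ∧ ∀ w ∈ K, ρ 0 w * c w ≤ m := by
    rcases K.eq_empty_or_nonempty with rfl | hne
    · exact ⟨0, le_rfl, hM, by simp⟩
    obtain ⟨w₀, hw₀, hmax⟩ := hK.exists_isMaxOn hne hρc₀
    exact ⟨max (ρ 0 w₀ * c w₀) 0, le_max_right _ _, max_lt (hlt w₀ hw₀) hM,
      fun w hw => (hmax hw).trans (le_max_left _ _)⟩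
  have hev : ∀ᶠ s in 𝓝 (0 : ℝ), m * exp (C * |s|) < M * u s :=
    ContinuousAt.eventually_lt (by fun_prop) (hu.const_mul M) (by simpa [hu₀] using hmM)
  filter_upwards [hC, hpos, hev] with s hCs hρs hs w hw
  rcases le_or_gt (c w) 0 with hcw | hcw
  · exact (mul_nonpos_of_nonneg_of_nonpos (hρs w hw) hcw).trans
      ((by positivity : 0 ≤ m * exp (C * |s|)).trans hs.le)
  · calc ρ s w * c w ≤ ρ 0 w * exp (C * |s|) * c w :=
          mul_le_mul_of_nonneg_right (hCs w hw) hcw.le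
      _ = ρ 0 w * c w * exp (C * |s|) := by ring
      _ ≤ m * exp (C * |s|) := mul_le_mul_of_nonneg_right (hm w hw) (exp_pos _).le
      _ ≤ M * u s := hs.le

variable {ξ : X}

lemma eventually_mul_exp_le_sSup (hK : IsCompact K)
    (hρ : ∀ᶠ s in 𝓝 (0 : ℝ), ContinuousOn (ρ s) K) (hc : ContinuousOn c K)
    (hlog : HasUniformLogDeriv ρ g K) (hpos : ∀ᶠ s in 𝓝 (0 : ℝ), ∀ w ∈ K, 0 < ρ s w)
    (hξ : ξ ∈ K) (hcξ : 0 ≤ c ξ) {ε : ℝ} (hε : 0 < ε) :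
    ∀ᶠ s in 𝓝 (0 : ℝ),
      ρ 0 ξ * c ξ * exp (s * g ξ - ε * |s|) ≤ sSup ((fun w => ρ s w * c w) '' K) := by
  filter_upwards [hρ, hlog.eventually_mul_exp_le hpos hε] with s hρs hs
  calc ρ 0 ξ * c ξ * exp (s * g ξ - ε * |s|) = ρ 0 ξ * exp (s * g ξ - ε * |s|) * c ξ := by
        ring
    _ ≤ ρ s ξ * c ξ := mul_le_mul_of_nonneg_right (hs ξ hξ).1 hcξ
    _ ≤ sSup ((fun w => ρ s w * c w) '' K) :=
        le_csSup (hK.bddAbove_image (hρs.mul hc)) (mem_image_of_mem _ hξ)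

lemma eventually_sSup_le_mul_exp (hK : IsCompact K) (hρ₀ : ContinuousOn (ρ 0) K)
    (hc : ContinuousOn c K) (hg : ContinuousOn g K) (hlog : HasUniformLogDeriv ρ g K)
    (hpos : ∀ᶠ s in 𝓝 (0 : ℝ), ∀ w ∈ K, 0 < ρ s w)
    (hmax : IsStrictMaxOn (fun w => ρ 0 w * c w) K ξ) (hM : 0 < ρ 0 ξ * c ξ)
    {ε : ℝ} (hε : 0 < ε) :
    ∀ᶠ s in 𝓝 (0 : ℝ),
      sSup ((fun w => ρ s w * c w) '' K) ≤ ρ 0 ξ * c ξ * exp (s * g ξ + ε * |s|) := by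
  have hξ := hmax.1
  obtain ⟨V, hV, hξV, hgV⟩ := mem_nhdsWithin.1 <|
    (hg ξ hξ).preimage_mem_nhdsWithin (Ioo_mem_nhds (by linarith : g ξ - ε / 2 < g ξ)
      (by linarith : g ξ < g ξ + ε / 2))
  obtain ⟨C, hC⟩ := hlog.exists_eventually_le_mul_exp hpos hK hg
  have hfar := eventually_forall_mul_le_of_lt (hK.diff hV) ((hρ₀.mul hc).mono sdiff_subset)
    (hC.mono fun s h w hw => h w hw.1) (hpos.mono fun s h w hw => (h w hw.1).le) hM
    (fun w hw => hmax.2 w hw.1 fun h => hw.2 (h ▸ hξV)) (u := fun s => exp (s * g ξ + ε * |s|))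
    (by fun_prop) (by simp)
  filter_upwards [hfar, hlog.eventually_mul_exp_le hpos (half_pos hε), hpos]
    with s hfar hnear hρs
  refine csSup_le (Set.Nonempty.image _ ⟨ξ, hξ⟩) ?_
  rintro _ ⟨w, hw, rfl⟩
  by_cases hwV : w ∈ V
  swap
  · exact hfar w ⟨hw, hwV⟩
  rcases le_or_gt (c w) 0 with hcw | hcw
  · exact (mul_nonpos_of_nonneg_of_nonpos (hρs w hw).le hcw).trans (by positivity)
  have hgw : s * g w ≤ s * g ξ + ε / 2 * |s| := by
    obtain ⟨hlo, hhi⟩ := hgV ⟨hwV, hw⟩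
    have hd : |g w - g ξ| ≤ ε / 2 := abs_sub_le_iff.2 ⟨by linarith, by linarith⟩
    have h := le_abs_self (s * (g w - g ξ))
    rw [abs_mul] at h
    linarith [mul_le_mul_of_nonneg_left hd (abs_nonneg s)]
  calc ρ s w * c w ≤ ρ 0 w * exp (s * g w + ε / 2 * |s|) * c w :=
        mul_le_mul_of_nonneg_right (hnear w hw).2 hcw.le
    _ = ρ 0 w * c w * exp (s * g w + ε / 2 * |s|) := by ring
    _ ≤ ρ 0 ξ * c ξ * exp (s * g ξ + ε * |s|) :=
        mul_le_mul (hmax.le hw) (exp_le_exp.2 (by linarith)) (exp_pos _).le hM.le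

lemma eventually_sSup_pos (hK : IsCompact K) (hρ : ∀ᶠ s in 𝓝 (0 : ℝ), ContinuousOn (ρ s) K)
    (hc : ContinuousOn c K) (hlog : HasUniformLogDeriv ρ g K)
    (hpos : ∀ᶠ s in 𝓝 (0 : ℝ), ∀ w ∈ K, 0 < ρ s w) (hξ : ξ ∈ K) (hM : 0 < ρ 0 ξ * c ξ) :
    ∀ᶠ s in 𝓝 (0 : ℝ), 0 < sSup ((fun w => ρ s w * c w) '' K) :=
  have hcξ : 0 ≤ c ξ := nonneg_of_mul_nonneg_right hM.le (hpos.self_of_nhds ξ hξ)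
  (eventually_mul_exp_le_sSup hK hρ hc hlog hpos hξ hcξ one_pos).mono
    fun _ hs => (mul_pos hM (exp_pos _)).trans_le hs

lemma hasDerivAt_log_sSup (hK : IsCompact K) (hρ : ∀ᶠ s in 𝓝 (0 : ℝ), ContinuousOn (ρ s) K)
    (hc : ContinuousOn c K) (hg : ContinuousOn g K) (hlog : HasUniformLogDeriv ρ g K)
    (hpos : ∀ᶠ s in 𝓝 (0 : ℝ), ∀ w ∈ K, 0 < ρ s w)
    (hmax : IsStrictMaxOn (fun w => ρ 0 w * c w) K ξ) (hM : 0 < ρ 0 ξ * c ξ) :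
    HasDerivAt (fun s => log (sSup ((fun w => ρ s w * c w) '' K))) (g ξ) 0 := by
  have hcξ : 0 ≤ c ξ := nonneg_of_mul_nonneg_right hM.le (hpos.self_of_nhds ξ hmax.1)
  have hbounds : ∀ ε > 0, ∀ᶠ s in 𝓝 (0 : ℝ),
      ρ 0 ξ * c ξ * exp (s * g ξ - ε * |s|) ≤ sSup ((fun w => ρ s w * c w) '' K) ∧
      sSup ((fun w => ρ s w * c w) '' K) ≤ ρ 0 ξ * c ξ * exp (s * g ξ + ε * |s|) :=
    fun ε hε => (eventually_mul_exp_le_sSup hK hρ hc hlog hpos hmax.1 hcξ hε).and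
      (eventually_sSup_le_mul_exp hK hρ.self_of_nhds hc hg hlog hpos hmax hM hε)
  have hM₀ : sSup ((fun w => ρ 0 w * c w) '' K) = ρ 0 ξ * c ξ := by
    have h := (hbounds 1 one_pos).self_of_nhds
    simp only [zero_mul, abs_zero, mul_zero, sub_zero, add_zero, exp_zero, mul_one] at h
    exact le_antisymm h.2 h.1
  rw [hasDerivAt_iff_isLittleO, Asymptotics.isLittleO_iff]
  intro ε hε
  filter_upwards [hbounds ε hε] with s hs
  have hMs := (mul_pos hM (exp_pos _)).trans_le hs.1
  simpa [hM₀] using (abs_log_sub_log_sub_le_iff hM hMs).2 hs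

lemma hasDerivAt_sSup_rpow (hK : IsCompact K) (hρ : ∀ᶠ s in 𝓝 (0 : ℝ), ContinuousOn (ρ s) K)
    (hc : ContinuousOn c K) (hg : ContinuousOn g K) (hlog : HasUniformLogDeriv ρ g K)
    (hpos : ∀ᶠ s in 𝓝 (0 : ℝ), ∀ w ∈ K, 0 < ρ s w)
    (hmax : IsStrictMaxOn (fun w => ρ 0 w * c w) K ξ) (hM : 0 < ρ 0 ξ * c ξ) (q : ℝ) :
    HasDerivAt (fun s => sSup ((fun w => ρ s w * c w) '' K) ^ q)
      (q * sSup ((fun w => ρ 0 w * c w) '' K) ^ q * g ξ) 0 :=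
  hasDerivAt_rpow_of_hasDerivAt_log (hasDerivAt_log_sSup hK hρ hc hg hlog hpos hmax hM)
    (eventually_sSup_pos hK hρ hc hlog hpos hmax.1 hM) q

end FirstVariation

section SupportFunction

variable {n : ℕ}

lemma bddAbove_inner_image {A : Set (EuclideanSpace ℝ (Fin n))} (hA : Bornology.IsBounded A)
    (x : EuclideanSpace ℝ (Fin n)) : BddAbove ((fun y => ⟪x, y⟫_ℝ) '' A) :=
  ((innerSL ℝ x).lipschitz.isBounded_image hA).bddAbove

lemma suppFn_convexHull {A : Set (EuclideanSpace ℝ (Fin n))} (hA : Bornology.IsBounded A)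
    (hne : A.Nonempty) (x : EuclideanSpace ℝ (Fin n)) :
    suppFn (convexHull ℝ A) x = suppFn A x := by
  refine le_antisymm (csSup_le ((hne.mono (subset_convexHull ℝ A)).image _) ?_)
    (csSup_le_csSup (bddAbove_inner_image (isBounded_convexHull.2 hA) x) (hne.image _)
      (image_mono (subset_convexHull ℝ A)))
  rintro _ ⟨z, hz, rfl⟩
  exact convexHull_min (fun a ha => le_csSup (bddAbove_inner_image hA x) ⟨a, ha, rfl⟩)
    (convex_halfSpace_le (innerₛₗ ℝ x).isLinear _) hz

lemma suppFn_convexHull_image_smul {K : Set (EuclideanSpace ℝ (Fin n))}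
    {r : EuclideanSpace ℝ (Fin n) → ℝ} (hbdd : Bornology.IsBounded ((fun w => r w • w) '' K))
    (hne : K.Nonempty) (v : EuclideanSpace ℝ (Fin n)) :
    suppFn (convexHull ℝ ((fun w => r w • w) '' K)) v = sSup ((fun w => r w * ⟪v, w⟫_ℝ) '' K) := by
  rw [suppFn_convexHull hbdd (hne.image _), suppFn, image_image]
  simp only [real_inner_smul_right]

lemma radFn_mul_inner_eq_suppFn {K : Set (EuclideanSpace ℝ (Fin n))}
    (hK : Bornology.IsBounded K) {x v : EuclideanSpace ℝ (Fin n)} {c : ℝ} (hc : 0 < c)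
    (hcx : c • x ∈ K) (hsupp : c * ⟪v, x⟫_ℝ = suppFn K v) (hpos : 0 < suppFn K v) :
    radFn K x * ⟪x, v⟫_ℝ = suppFn K v := by
  have hxv : 0 < ⟪v, x⟫_ℝ := pos_of_mul_pos_right (hsupp ▸ hpos) hc.le
  have hle : ∀ c' ∈ {c' : ℝ | 0 < c' ∧ c' • x ∈ K}, c' ≤ suppFn K v / ⟪v, x⟫_ℝ := by
    rintro c' ⟨-, hc'x⟩
    rw [le_div_iff₀ hxv, ← real_inner_smul_right]
    exact le_csSup (bddAbove_inner_image hK v) (mem_image_of_mem _ hc'x)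
  rw [real_inner_comm]
  refine le_antisymm ((le_div_iff₀ hxv).1 (csSup_le ⟨c, hc, hcx⟩ hle)) ?_
  rw [← hsupp]
  exact mul_le_mul_of_nonneg_right (le_csSup ⟨_, hle⟩ ⟨hc, hcx⟩) hxv.le

lemma isStrictMaxOn_of_radFn_unique {Θ : Set (EuclideanSpace ℝ (Fin n))} (hΘ : IsCompact Θ)
    (hΘ_sub : Θ ⊆ sphere 0 1) {r : EuclideanSpace ℝ (Fin n) → ℝ} (hr : ContinuousOn r Θ)
    (hr_pos : ∀ w ∈ Θ, 0 < r w) {v w₁ ξ : EuclideanSpace ℝ (Fin n)} (hw₁ : w₁ ∈ Θ)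
    (hvw₁ : 0 < ⟪v, w₁⟫_ℝ)
    (hξ_uniq : ∀ ξ' ∈ sphere (0 : EuclideanSpace ℝ (Fin n)) 1,
      radFn (convexHull ℝ ((fun w => r w • w) '' Θ)) ξ' * ⟪ξ', v⟫_ℝ
        = suppFn (convexHull ℝ ((fun w => r w • w) '' Θ)) v → ξ' = ξ) :
    IsStrictMaxOn (fun w => r w * ⟪v, w⟫_ℝ) Θ ξ := by
  have hbdd : Bornology.IsBounded ((fun w => r w • w) '' Θ) :=
    (hΘ.image_of_continuousOn (hr.smul continuousOn_id)).isBounded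
  have hφ : ContinuousOn (fun w => r w * ⟪v, w⟫_ℝ) Θ := hr.mul (by fun_prop)
  have hsupp := suppFn_convexHull_image_smul hbdd ⟨w₁, hw₁⟩ v
  have hM : 0 < sSup ((fun w => r w * ⟪v, w⟫_ℝ) '' Θ) :=
    (mul_pos (hr_pos w₁ hw₁) hvw₁).trans_le
      (le_csSup (hΘ.bddAbove_image hφ) (mem_image_of_mem _ hw₁))
  have huniq : ∀ w ∈ Θ, r w * ⟪v, w⟫_ℝ = sSup ((fun w => r w * ⟪v, w⟫_ℝ) '' Θ) → w = ξ :=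
    fun w hw hwM => hξ_uniq w (hΘ_sub hw) <| radFn_mul_inner_eq_suppFn
      (isBounded_convexHull.2 hbdd) (hr_pos w hw) (subset_convexHull ℝ _ (mem_image_of_mem _ hw))
      (hsupp ▸ hwM) (hsupp ▸ hM)
  obtain ⟨ξ₀, hξ₀, hξ₀M : r ξ₀ * ⟪v, ξ₀⟫_ℝ = _⟩ :=
    (hΘ.image_of_continuousOn hφ).sSup_mem ⟨_, mem_image_of_mem _ hw₁⟩
  obtain rfl : ξ₀ = ξ := huniq ξ₀ hξ₀ hξ₀M
  refine ⟨hξ₀, fun w hw hne => ?_⟩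
  show r w * ⟪v, w⟫_ℝ < r ξ₀ * ⟪v, ξ₀⟫_ℝ
  rw [hξ₀M]
  exact (le_csSup (hΘ.bddAbove_image hφ) (mem_image_of_mem _ hw)).lt_of_ne (mt (huniq w hw) hne)

end SupportFunction

theorem stmt13_general (n : ℕ)
    (Θ : Set (EuclideanSpace ℝ (Fin n))) (hΘ_closed : IsClosed Θ)
    (hΘ_sub : Θ ⊆ sphere (0 : EuclideanSpace ℝ (Fin n)) 1)
    (hΘ_hemi : ∀ u ∈ sphere (0 : EuclideanSpace ℝ (Fin n)) 1, ∃ w ∈ Θ, ⟪w, u⟫_ℝ < 0)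
    (g : EuclideanSpace ℝ (Fin n) → ℝ) (hg : ContinuousOn g Θ)
    (δ : ℝ) (hδ : 0 < δ)
    (ρ : ℝ → EuclideanSpace ℝ (Fin n) → ℝ)
    (hρ_cont : ∀ s ∈ Set.Ioo (-δ) δ, ContinuousOn (ρ s) Θ)
    (hρ_pos : ∀ s ∈ Set.Ioo (-δ) δ, ∀ v ∈ Θ, 0 < ρ s v)
    (hlog : ∀ ε > (0 : ℝ), ∃ δ' > (0 : ℝ), ∀ s : ℝ, |s| < δ' → s ≠ 0 → ∀ v ∈ Θ,
      |Real.log (ρ s v) - Real.log (ρ 0 v) - s * g v| ≤ ε * |s|)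
    (p : ℝ) (v : EuclideanSpace ℝ (Fin n)) (hv : v ∈ sphere (0 : EuclideanSpace ℝ (Fin n)) 1)
    (ξ : EuclideanSpace ℝ (Fin n))
    (hξ_uniq : ∀ ξ' ∈ sphere (0 : EuclideanSpace ℝ (Fin n)) 1,
      radFn (convexHull ℝ ((fun w => ρ 0 w • w) '' Θ)) ξ' * ⟪ξ', v⟫_ℝ
        = suppFn (convexHull ℝ ((fun w => ρ 0 w • w) '' Θ)) v → ξ' = ξ) :
    ξ ∈ Θ ∧
    Filter.Tendsto (fun s : ℝ =>
        ((suppFn (convexHull ℝ ((fun w => ρ s w • w) '' Θ)) v) ^ (-p)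
          - (suppFn (convexHull ℝ ((fun w => ρ 0 w • w) '' Θ)) v) ^ (-p)) / s)
      (nhdsWithin (0 : ℝ) {(0 : ℝ)}ᶜ)
      (nhds (-p * (suppFn (convexHull ℝ ((fun w => ρ 0 w • w) '' Θ)) v) ^ (-p) * g ξ)) := by
  have hΘ : IsCompact Θ := (isCompact_sphere 0 1).of_isClosed_subset hΘ_closed hΘ_sub
  have hIoo : Ioo (-δ) δ ∈ 𝓝 (0 : ℝ) := Ioo_mem_nhds (neg_neg_iff_pos.2 hδ) hδ
  have h₀ : (0 : ℝ) ∈ Ioo (-δ) δ := mem_of_mem_nhds hIoo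
  obtain ⟨w₁, hw₁, hw₁v⟩ := hΘ_hemi (-v) (by simpa using hv)
  have hvw₁ : 0 < ⟪v, w₁⟫_ℝ := by rwa [inner_neg_right, neg_lt_zero, real_inner_comm] at hw₁v
  have hsupp : ∀ s ∈ Ioo (-δ) δ, suppFn (convexHull ℝ ((fun w => ρ s w • w) '' Θ)) v
      = sSup ((fun w => ρ s w * ⟪v, w⟫_ℝ) '' Θ) := fun s hs =>
    suppFn_convexHull_image_smul (hΘ.image_of_continuousOn
      ((hρ_cont s hs).smul continuousOn_id)).isBounded ⟨w₁, hw₁⟩ v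
  have hmax := isStrictMaxOn_of_radFn_unique hΘ hΘ_sub (hρ_cont 0 h₀) (hρ_pos 0 h₀) hw₁ hvw₁
    hξ_uniq
  have hderiv : HasDerivAt (fun s => suppFn (convexHull ℝ ((fun w => ρ s w • w) '' Θ)) v ^ (-p))
      (-p * sSup ((fun w => ρ 0 w * ⟪v, w⟫_ℝ) '' Θ) ^ (-p) * g ξ) 0 :=
    (hasDerivAt_sSup_rpow hΘ (eventually_of_mem hIoo hρ_cont) (by fun_prop) hg
      (hasUniformLogDeriv_of_forall_ne_zero hlog) (eventually_of_mem hIoo hρ_pos) hmax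
      ((mul_pos (hρ_pos 0 h₀ w₁ hw₁) hvw₁).trans_le (hmax.le hw₁)) (-p)).congr_of_eventuallyEq
      (eventually_of_mem hIoo fun s hs => congrArg (· ^ (-p)) (hsupp s hs))
  rw [← hsupp 0 h₀, hasDerivAt_iff_tendsto_slope] at hderiv
  exact ⟨hmax.1, hderiv.congr fun s => by rw [slope_def_field, sub_zero]⟩

/-- Differentiability of `h^{-p}` of a logarithmic family of convex hulls at a point `v` of
the sphere admitting a unique radial Gauss image point `ξ`: one has `ξ ∈ Θ` and
`lim_{s→0} (h_{⟨ρ_s⟩}(v)^{-p} − h_{⟨ρ₀⟩}(v)^{-p})/s = −p h_{⟨ρ₀⟩}(v)^{-p} g(ξ)`. -/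
theorem stmt13 (n : ℕ) (hn : 2 ≤ n)
    (Θ : Set (EuclideanSpace ℝ (Fin n))) (hΘ_closed : IsClosed Θ)
    (hΘ_sub : Θ ⊆ sphere (0 : EuclideanSpace ℝ (Fin n)) 1)
    (hΘ_hemi : ∀ u ∈ sphere (0 : EuclideanSpace ℝ (Fin n)) 1, ∃ w ∈ Θ, ⟪w, u⟫_ℝ < 0)
    (g : EuclideanSpace ℝ (Fin n) → ℝ) (hg : ContinuousOn g Θ)
    (δ : ℝ) (hδ : 0 < δ)
    (ρ : ℝ → EuclideanSpace ℝ (Fin n) → ℝ)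
    (hρ_cont : ∀ s ∈ Set.Ioo (-δ) δ, ContinuousOn (ρ s) Θ)
    (hρ_pos : ∀ s ∈ Set.Ioo (-δ) δ, ∀ v ∈ Θ, 0 < ρ s v)
    (hlog : ∀ ε > (0 : ℝ), ∃ δ' > (0 : ℝ), ∀ s : ℝ, |s| < δ' → s ≠ 0 → ∀ v ∈ Θ,
      |Real.log (ρ s v) - Real.log (ρ 0 v) - s * g v| ≤ ε * |s|)
    (p : ℝ) (v : EuclideanSpace ℝ (Fin n)) (hv : v ∈ sphere (0 : EuclideanSpace ℝ (Fin n)) 1)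
    (ξ : EuclideanSpace ℝ (Fin n)) (hξ : ξ ∈ sphere (0 : EuclideanSpace ℝ (Fin n)) 1)
    (hξ_eq : radFn (convexHull ℝ ((fun w => ρ 0 w • w) '' Θ)) ξ * ⟪ξ, v⟫_ℝ
      = suppFn (convexHull ℝ ((fun w => ρ 0 w • w) '' Θ)) v)
    (hξ_uniq : ∀ ξ' ∈ sphere (0 : EuclideanSpace ℝ (Fin n)) 1,
      radFn (convexHull ℝ ((fun w => ρ 0 w • w) '' Θ)) ξ' * ⟪ξ', v⟫_ℝ
        = suppFn (convexHull ℝ ((fun w => ρ 0 w • w) '' Θ)) v → ξ' = ξ) :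
    ξ ∈ Θ ∧
    Filter.Tendsto (fun s : ℝ =>
        ((suppFn (convexHull ℝ ((fun w => ρ s w • w) '' Θ)) v) ^ (-p)
          - (suppFn (convexHull ℝ ((fun w => ρ 0 w • w) '' Θ)) v) ^ (-p)) / s)
      (nhdsWithin (0 : ℝ) {(0 : ℝ)}ᶜ)
      (nhds (-p * (suppFn (convexHull ℝ ((fun w => ρ 0 w • w) '' Θ)) v) ^ (-p) * g ξ)) :=
  stmt13_general n Θ hΘ_closed hΘ_sub hΘ_hemi g hg δ hδ ρ hρ_cont hρ_pos hlog p v hv ξ hξ_uniq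
end
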